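/- arXiv:2505.07047 — 2 statements merged into one kernel-verified Lean document; each statement's English description precedes it below -/
import Mathlib

section
/- Lower bound on switchings from battery diversity on a port: let x : B × {1,…,T} → {0,1} describe charging on a fixed port with Σ_j x(j,t) ≤ 1 for each t, and let y : {1,…,T−1} → {0,1} satisfy y(t) ≥ x(j,t) − x(j,t+1) and y(t) ≥ Σ_j x(j,t+1) − Σ_j x(j,t) for all j, t. If m distinct batteries j satisfy x(j,t) = 1 for some t, then Σ_{t=1}^{T−1} y(t) ≥ m − 1. -/
/-- Lower bound on switchings from battery diversity on a port: if `m` distinct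
batteries are each charged at some point on a single port, then at least
`m − 1` switchings occur. -/
theorem stmt_16 {B : Type*} [Fintype B] (T : ℕ) (hT : 1 ≤ T)
    (x : B → ℕ → ℤ) (y : ℕ → ℤ)
    (hxbin : ∀ j t, x j t = 0 ∨ x j t = 1)
    (hybin : ∀ t, y t = 0 ∨ y t = 1)
    (hcap : ∀ t ∈ Finset.Icc 1 T, ∑ j, x j t ≤ 1)
    (h1 : ∀ j, ∀ t ∈ Finset.Icc 1 (T - 1), x j t - x j (t + 1) ≤ y t)
    (h2 : ∀ t ∈ Finset.Icc 1 (T - 1), (∑ j, x j (t + 1)) - ∑ j, x j t ≤ y t)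
    (m : ℕ) (S : Finset B) (hScard : S.card = m)
    (hS : ∀ j ∈ S, ∃ t ∈ Finset.Icc 1 T, x j t = 1) :
    (m : ℤ) - 1 ≤ ∑ t ∈ Finset.Icc 1 (T - 1), y t := by
  classical
  have hy0 : ∀ t, (0:ℤ) ≤ y t := fun t => by rcases hybin t with h|h <;> simp [h]
  have hx0 : ∀ j t, (0:ℤ) ≤ x j t := fun j t => by rcases hxbin j t with h|h <;> simp [h]
  have hsumy0 : (0:ℤ) ≤ ∑ t ∈ Finset.Icc 1 (T-1), y t :=
    Finset.sum_nonneg fun t _ => hy0 t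
  have huniq : ∀ t ∈ Finset.Icc 1 T, ∀ j j', x j t = 1 → x j' t = 1 → j = j' := by
    intro t ht j j' hj hj'
    by_contra hne
    have h2le : (2:ℤ) ≤ ∑ k, x k t := by
      have := Finset.sum_le_sum_of_subset_of_nonneg
        (Finset.subset_univ ({j, j'} : Finset B)) (fun k _ _ => hx0 k t)
      rwa [Finset.sum_pair hne, hj, hj'] at this
    linarith [hcap t ht]
  rcases S.eq_empty_or_nonempty with hSe | hSne
  · subst hSe
    simp only [Finset.card_empty] at hScard
    subst hScard
    simp only [Nat.cast_zero]
    linarith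
  have hτ : ∀ j ∈ S, ∃ t, t ∈ Finset.Icc 1 T ∧ x j t = 1 := by
    intro j hj; obtain ⟨t, ht, hx⟩ := hS j hj; exact ⟨t, ht, hx⟩
  set τ : B → ℕ := fun j => if h : j ∈ S then (hτ j h).choose else 0 with hτdef
  have hτspec : ∀ j ∈ S, τ j ∈ Finset.Icc 1 T ∧ x j (τ j) = 1 := by
    intro j hj
    simp only [hτdef, dif_pos hj]
    exact (hτ j hj).choose_spec
  obtain ⟨j0, hj0S, hj0max⟩ := S.exists_max_image τ hSne
  have key : ∀ j ∈ S.erase j0, ∃ s, s ∈ Finset.Icc 1 (T-1) ∧ x j s = 1 ∧ 1 ≤ y s := by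
    intro j hj
    have hjS := Finset.mem_of_mem_erase hj
    have hjne : j ≠ j0 := Finset.ne_of_mem_erase hj
    obtain ⟨hτjmem, hτjx⟩ := hτspec j hjS
    obtain ⟨hτ0mem, hτ0x⟩ := hτspec j0 hj0S
    have hτj1 : 1 ≤ τ j := (Finset.mem_Icc.1 hτjmem).1
    have hτ0T : τ j0 ≤ T := (Finset.mem_Icc.1 hτ0mem).2
    have hlt : τ j < τ j0 := by
      rcases lt_or_eq_of_le (hj0max j hjS) with h|h
      · exact h
      · exact absurd (huniq (τ j) hτjmem j j0 hτjx (h ▸ hτ0x)) hjne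
    set P : Finset ℕ := (Finset.Icc (τ j) (τ j0 - 1)).filter (fun s => x j s = 1) with hP
    have hPne : P.Nonempty := ⟨τ j, by
      simp only [hP, Finset.mem_filter, Finset.mem_Icc]
      refine ⟨⟨le_refl _, ?_⟩, hτjx⟩
      omega⟩
    obtain ⟨s, hsP, hsmax⟩ := P.exists_max_image id hPne
    simp only [hP, Finset.mem_filter, Finset.mem_Icc] at hsP
    obtain ⟨⟨hs1, hs2⟩, hsx⟩ := hsP
    have hsIcc : s ∈ Finset.Icc 1 (T-1) := by rw [Finset.mem_Icc]; omega
    have hnext : x j (s+1) = 0 := by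
      rcases hxbin j (s+1) with h|h
      · exact h
      · exfalso
        by_cases hcase : s + 1 = τ j0
        · exact hjne (huniq (τ j0) hτ0mem j j0 (hcase ▸ h) hτ0x)
        · have hmem : s + 1 ∈ P := by
            simp only [hP, Finset.mem_filter, Finset.mem_Icc]
            exact ⟨⟨by omega, by omega⟩, h⟩
          have := hsmax _ hmem
          simp only [id] at this
          omega
    have hy1 : 1 ≤ y s := by
      have := h1 j s hsIcc
      rw [hsx, hnext] at this; linarith
    exact ⟨s, hsIcc, hsx, hy1⟩
  choose g hg1 hg2 hg3 using key
  set g' : B → ℕ := fun j => if h : j ∈ S.erase j0 then g j h else 0 with hg'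
  set A : Finset ℕ := (Finset.Icc 1 (T-1)).filter (fun t => 1 ≤ y t) with hA
  have hmaps : ∀ j ∈ S.erase j0, g' j ∈ A := by
    intro j hj
    simp only [hg', dif_pos hj, hA, Finset.mem_filter]
    exact ⟨hg1 j hj, hg3 j hj⟩
  have hinj : Set.InjOn g' (S.erase j0) := by
    intro j hj j' hj' heq
    simp only [Finset.coe_sort_coe, Finset.mem_coe] at hj hj'
    have e1 : g' j = g j hj := dif_pos hj
    have e2 : g' j' = g j' hj' := dif_pos hj'
    have hxj : x j (g' j) = 1 := by rw [e1]; exact hg2 j hj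
    have hxj' : x j' (g' j) = 1 := by rw [heq, e2]; exact hg2 j' hj'
    have hmem : g' j ∈ Finset.Icc 1 T := by
      have := Finset.mem_Icc.1 (e1 ▸ hg1 j hj)
      rw [Finset.mem_Icc]; omega
    exact huniq _ hmem j j' hxj hxj'
  have hcardle : (S.erase j0).card ≤ A.card :=
    Finset.card_le_card_of_injOn g' hmaps hinj
  have hcarderase : (S.erase j0).card = m - 1 := by
    rw [Finset.card_erase_of_mem hj0S, hScard]
  have hm1 : 1 ≤ m := by
    rw [← hScard]; exact Finset.card_pos.2 hSne
  have hsumA : (A.card : ℤ) ≤ ∑ t ∈ A, y t := by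
    calc (A.card : ℤ) = ∑ _t ∈ A, (1:ℤ) := by simp
    _ ≤ ∑ t ∈ A, y t := Finset.sum_le_sum (fun t ht => (Finset.mem_filter.1 ht).2)
  have hsub : ∑ t ∈ A, y t ≤ ∑ t ∈ Finset.Icc 1 (T-1), y t :=
    Finset.sum_le_sum_of_subset_of_nonneg (Finset.filter_subset _ _)
      (fun t _ _ => hy0 t)
  have : ((m - 1 : ℕ) : ℤ) ≤ ∑ t ∈ Finset.Icc 1 (T-1), y t := by
    calc ((m - 1 : ℕ) : ℤ) ≤ (A.card : ℤ) := by
          rw [← hcarderase]; exact_mod_cast hcardle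
    _ ≤ ∑ t ∈ A, y t := hsumA
    _ ≤ _ := hsub
  have hcast : ((m - 1 : ℕ) : ℤ) = (m : ℤ) - 1 := by omega
  linarith [hcast ▸ this]
end

section
/- Projection inequality for the time-block LP: let λ ∈ [0,1] indexed by blocks (t₁,t₂) with 0 ≤ t₁ < t₂ ≤ T and s : B × {1,…,T} → [0,1] satisfy λ(t₁,t₂)·(t₂ − t₁) ≥ Σ_{j ∈ B} Σ_{t=t₁+1}^{t₂} s(j,t) for every block, and let y : {1,…,T−1} → [0,1] satisfy y(t₁) ≥ Σ_{t=t₁+1}^{T} λ(t₁,t) for every t₁ ∈ {1,…,T−1}. Then y(t₁) ≥ Σ_{j ∈ B} s(j, t₁+1) for every t₁ ∈ {1,…,T−1}. -/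
/-- Projection inequality for the time-block LP: if `λ` dominates the averaged
block sums of `s` and `y` dominates the row sums of `λ`, then `y` satisfies the
original switching constraint `y(t₁) ≥ Σ_j s(j, t₁+1)`. -/
theorem stmt_19 {B : Type*} [Fintype B] (T : ℕ) (hT : 2 ≤ T)
    (lam : ℕ → ℕ → ℝ) (s : B → ℕ → ℝ) (y : ℕ → ℝ)
    (hlam01 : ∀ t1 t2, 0 ≤ lam t1 t2 ∧ lam t1 t2 ≤ 1)
    (hs01 : ∀ j t, 0 ≤ s j t ∧ s j t ≤ 1)
    (hy01 : ∀ t, 0 ≤ y t ∧ y t ≤ 1)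
    (h1 : ∀ t1 t2, t1 < t2 → t2 ≤ T →
      (∑ j, ∑ t ∈ Finset.Icc (t1 + 1) t2, s j t) ≤
        lam t1 t2 * ((t2 : ℝ) - t1))
    (h2 : ∀ t1 ∈ Finset.Icc 1 (T - 1),
      (∑ t2 ∈ Finset.Icc (t1 + 1) T, lam t1 t2) ≤ y t1) :
    ∀ t1 ∈ Finset.Icc 1 (T - 1), (∑ j, s j (t1 + 1)) ≤ y t1 := by
  intro t1 ht1
  simp only [Finset.mem_Icc] at ht1
  have h1T : t1 + 1 ≤ T := by omega
  have hblock := h1 t1 (t1 + 1) (Nat.lt_succ_self t1) h1T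
  have hcast : ((t1 + 1 : ℕ) : ℝ) - t1 = 1 := by push_cast; ring
  rw [hcast, mul_one] at hblock
  simp only [Finset.Icc_self, Finset.sum_singleton] at hblock
  have hsum : lam t1 (t1 + 1) ≤ ∑ t2 ∈ Finset.Icc (t1 + 1) T, lam t1 t2 :=
    Finset.single_le_sum (fun i _ => (hlam01 t1 i).1)
      (Finset.mem_Icc.mpr ⟨le_refl _, h1T⟩)
  have := h2 t1 (Finset.mem_Icc.mpr ⟨ht1.1, ht1.2⟩)
  linarith
end
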